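/- arXiv:2309.14632 — 2 statements merged into one kernel-verified Lean document; each statement's English description precedes it below -/
import Mathlib

section
/- If X is a quasiregular Hausdorff space, then |X| ≤ πχ(X)^(c(X)·wψ_c(X)). -/
open Cardinal Set TopologicalSpace

universe u

/-- The density of a space: the least cardinality of a dense subset. -/
noncomputable def dens (X : Type u) [TopologicalSpace X] : Cardinal.{u} :=
  sInf {c : Cardinal.{u} | ∃ D : Set X, Dense D ∧ #D = c}

/-- A local π-base at a point: a family of nonempty open sets such that every
open set containing the point contains a member of the family. -/
def IsLocalPiBase (X : Type u) [TopologicalSpace X] (x : X) (𝒱 : Set (Set X)) : Prop :=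
  (∀ V ∈ 𝒱, IsOpen V ∧ V.Nonempty) ∧
    ∀ U : Set X, IsOpen U → x ∈ U → ∃ V ∈ 𝒱, V ⊆ U

/-- The π-character at a point: the least infinite cardinality of a local π-base. -/
noncomputable def piCharPoint (X : Type u) [TopologicalSpace X] (x : X) : Cardinal.{u} :=
  sInf {κ : Cardinal.{u} | ℵ₀ ≤ κ ∧ ∃ 𝒱 : Set (Set X), IsLocalPiBase X x 𝒱 ∧ #𝒱 ≤ κ}

/-- The π-character of a space. -/
noncomputable def piChar (X : Type u) [TopologicalSpace X] : Cardinal.{u} :=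
  ⨆ x : X, piCharPoint X x

/-- A π-base for a space. -/
def IsPiBase (X : Type u) [TopologicalSpace X] (𝒱 : Set (Set X)) : Prop :=
  (∀ V ∈ 𝒱, IsOpen V ∧ V.Nonempty) ∧
    ∀ U : Set X, IsOpen U → U.Nonempty → ∃ V ∈ 𝒱, V ⊆ U

/-- The π-weight of a space: the least infinite cardinality of a π-base. -/
noncomputable def piWeight (X : Type u) [TopologicalSpace X] : Cardinal.{u} :=
  sInf {κ : Cardinal.{u} | ℵ₀ ≤ κ ∧ ∃ 𝒱 : Set (Set X), IsPiBase X 𝒱 ∧ #𝒱 ≤ κ}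

/-- The cellularity of a space: the least infinite cardinal bounding the size of
every pairwise disjoint family of nonempty open sets. -/
noncomputable def cellularity (X : Type u) [TopologicalSpace X] : Cardinal.{u} :=
  sInf {κ : Cardinal.{u} | ℵ₀ ≤ κ ∧ ∀ 𝒞 : Set (Set X),
    (∀ U ∈ 𝒞, IsOpen U ∧ U.Nonempty) → 𝒞.PairwiseDisjoint id → #𝒞 ≤ κ}

/-- The set of infinite cardinals κ witnessing the nonquasiregularity degree:
every nonempty open set U contains a nonempty set ⋂₀ 𝒱 with 𝒱 an open family of
size at most κ and ⋂_{V ∈ 𝒱} cl V ⊆ U. -/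
def nqSet (X : Type u) [TopologicalSpace X] : Set Cardinal.{u} :=
  {κ : Cardinal.{u} | ℵ₀ ≤ κ ∧ ∀ U : Set X, IsOpen U → U.Nonempty →
    ∃ 𝒱 : Set (Set X), (∀ V ∈ 𝒱, IsOpen V) ∧ #𝒱 ≤ κ ∧
      (⋂₀ 𝒱).Nonempty ∧ (⋂ V ∈ 𝒱, closure V) ⊆ U}

/-- A space is an nq-space if its nonquasiregularity degree is defined. -/
def IsNqSpace (X : Type u) [TopologicalSpace X] : Prop :=
  (nqSet X).Nonempty

/-- The nonquasiregularity degree of a space. -/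
noncomputable def nq (X : Type u) [TopologicalSpace X] : Cardinal.{u} :=
  sInf (nqSet X)

/-- The closed pseudocharacter at a point. -/
noncomputable def psiCPoint (X : Type u) [TopologicalSpace X] (x : X) : Cardinal.{u} :=
  sInf {κ : Cardinal.{u} | ℵ₀ ≤ κ ∧ ∃ 𝒱 : Set (Set X),
    (∀ V ∈ 𝒱, IsOpen V ∧ x ∈ V) ∧ #𝒱 ≤ κ ∧ (⋂ V ∈ 𝒱, closure V) = {x}}

/-- The closed pseudocharacter of a space. -/
noncomputable def psiC (X : Type u) [TopologicalSpace X] : Cardinal.{u} :=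
  sInf {κ : Cardinal.{u} | ℵ₀ ≤ κ ∧ ∀ x : X, ∃ 𝒱 : Set (Set X),
    (∀ V ∈ 𝒱, IsOpen V ∧ x ∈ V) ∧ #𝒱 ≤ κ ∧ (⋂ V ∈ 𝒱, closure V) = {x}}

/-- The dense closed pseudocharacter of a space. -/
noncomputable def dPsiC (X : Type u) [TopologicalSpace X] : Cardinal.{u} :=
  sInf {κ : Cardinal.{u} | ℵ₀ ≤ κ ∧ ∃ D : Set X, Dense D ∧ ∀ d ∈ D, psiCPoint X d ≤ κ}

/-- The weak closed pseudocharacter at a point: the least infinite cardinality of a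
family 𝒱 of open sets with ⋂_{V ∈ 𝒱} cl V = {x}. -/
noncomputable def wPsiCPoint (X : Type u) [TopologicalSpace X] (x : X) : Cardinal.{u} :=
  sInf {κ : Cardinal.{u} | ℵ₀ ≤ κ ∧ ∃ 𝒱 : Set (Set X),
    (∀ V ∈ 𝒱, IsOpen V) ∧ #𝒱 ≤ κ ∧ (⋂ V ∈ 𝒱, closure V) = {x}}

/-- The weak closed pseudocharacter of a space. -/
noncomputable def wPsiC (X : Type u) [TopologicalSpace X] : Cardinal.{u} :=
  ⨆ x : X, wPsiCPoint X x

/-- The pseudocharacter of a space: the least infinite cardinal κ such that every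
point is the intersection of at most κ open sets. -/
noncomputable def psi (X : Type u) [TopologicalSpace X] : Cardinal.{u} :=
  sInf {κ : Cardinal.{u} | ℵ₀ ≤ κ ∧ ∀ x : X, ∃ 𝒱 : Set (Set X),
    (∀ V ∈ 𝒱, IsOpen V) ∧ #𝒱 ≤ κ ∧ ⋂₀ 𝒱 = {x}}

/-- The Lindelöf degree of a space. -/
noncomputable def lindelofDegree (X : Type u) [TopologicalSpace X] : Cardinal.{u} :=
  sInf {κ : Cardinal.{u} | ℵ₀ ≤ κ ∧ ∀ 𝒰 : Set (Set X), (∀ U ∈ 𝒰, IsOpen U) →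
    ⋃₀ 𝒰 = Set.univ → ∃ 𝒱 ⊆ 𝒰, #𝒱 ≤ κ ∧ ⋃₀ 𝒱 = Set.univ}

/-- The cardinality of the collection of regular open subsets of a space. -/
noncomputable def cardRO (X : Type u) [TopologicalSpace X] : Cardinal.{u} :=
  #{R : Set X | R = interior (closure R)}

/-- A space is quasiregular if every nonempty open set contains a nonempty open
set whose closure is contained in it. -/
def Quasiregular (X : Type u) [TopologicalSpace X] : Prop :=
  ∀ U : Set X, IsOpen U → U.Nonempty →
    ∃ V : Set X, IsOpen V ∧ V.Nonempty ∧ closure V ⊆ U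


/-! A closing-off argument of length `c(X)⁺` (Šapirovskiĭ) produces a set `D` with
`|D| ≤ πχ(X)^c(X)` that lies in no proper closed set `cl ⋃ 𝒮` with `𝒮` a family of at most `c(X)`
members of `⋃_{x ∈ D} 𝓑ₓ`, the local π-bases at points of `D`; in a quasiregular space this makes
that union a π-base, so `πw(X) ≤ πχ(X)^c(X)`. Given a π-base `P`, every regular closed set `cl W` is
`cl ⋃ 𝒯` for a maximal disjoint family `𝒯 ⊆ P` of sets inside `W`, so there are at most
`πw(X)^c(X)` of them. In a Hausdorff space `x ↦ {cl V : V ∈ 𝒱ₓ}`, with `𝒱ₓ` a weak closed pseudobase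
at `x`, is injective, hence `|X| ≤ (πw(X)^c(X))^wψ_c(X) = πw(X)^(c(X)·wψ_c(X))`. -/

theorem exists_forall_lt_of_card_lt_cof {α : Type u} [LinearOrder α] {s : Set α}
    (hs : #s < Order.cof α) : ∃ i, ∀ j ∈ s, j < i :=
  not_isCofinal_iff.1 fun h => (Order.cof_le h).not_gt hs

/-- `D` is the union of the chain `Dᵢ = f (⋃_{j < i} Dⱼ)`, `i < κ⁺`; as `κ⁺` is regular, a set of
size `κ` in `D` lies in `⋃_{j < i} Dⱼ` for a single `i`. -/
theorem exists_card_le_forall_subset_of_monotone {α : Type u} {κ μ : Cardinal.{u}}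
    (hκ : ℵ₀ ≤ κ) (hκμ : Order.succ κ ≤ μ) {f : Set α → Set α} (hf : Monotone f)
    (hf_card : ∀ A : Set α, #A ≤ μ → #(f A) ≤ μ) :
    ∃ D : Set α, #D ≤ μ ∧ ∀ A ⊆ D, #A ≤ κ → f A ⊆ D := by
  have hκμ' : κ ≤ μ := (Order.le_succ κ).trans hκμ
  have hμ : ℵ₀ ≤ μ := hκ.trans hκμ'
  obtain ⟨D, hD⟩ : ∃ D : (Order.succ κ).ord.ToType → Set α, ∀ i, D i = f (⋃ j : Iio i, D j) :=
    ⟨_, WellFounded.fix_eq wellFounded_lt fun i rec => f (⋃ j : Iio i, rec j.1 j.2)⟩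
  have hD_card : ∀ i, #(D i) ≤ μ := by
    intro i
    induction i using WellFoundedLT.induction with
    | _ i ih =>
      rw [hD]
      refine hf_card _ ((mk_iUnion_le _).trans ?_)
      calc #(Iio i) * ⨆ j : Iio i, #(D j) ≤ μ * μ :=
            mul_le_mul' ((Order.le_of_lt_succ (by simpa using mk_Iio_lt i)).trans hκμ')
              (ciSup_le' fun j => ih j j.2)
        _ = μ := mul_eq_self hμ
  refine ⟨⋃ i, D i, ?_, fun A hA hAκ => ?_⟩
  · calc #(⋃ i, D i) ≤ #(Order.succ κ).ord.ToType * ⨆ i, #(D i) := mk_iUnion_le _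
      _ ≤ μ * μ := mul_le_mul' (by rwa [mk_ord_toType]) (ciSup_le' hD_card)
      _ = μ := mul_eq_self hμ
  · choose idx hidx using fun a : A => mem_iUnion.1 (hA a.2)
    obtain ⟨i₀, hi₀⟩ := exists_forall_lt_of_card_lt_cof (s := range idx) (by
      rw [Ordinal.cof_toType, (isRegular_succ hκ).cof_ord]
      exact mk_range_le.trans_lt (hAκ.trans_lt (Order.lt_succ κ)))
    calc f A ⊆ f (⋃ j : Iio i₀, D j) :=
          hf fun a ha => mem_iUnion.2 ⟨⟨idx ⟨a, ha⟩, hi₀ _ (mem_range_self _)⟩, hidx _⟩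
      _ = D i₀ := (hD i₀).symm
      _ ⊆ ⋃ i, D i := subset_iUnion D i₀

theorem succ_le_power_of_two_le {κ θ : Cardinal.{u}} (hθ : 2 ≤ θ) : Order.succ κ ≤ θ ^ κ :=
  (Order.succ_le_of_lt (cantor κ)).trans (power_le_power_right hθ)

theorem exists_maximal_pairwiseDisjoint {α : Type*} (Q : Set (Set α)) :
    ∃ 𝒯 ⊆ Q, 𝒯.PairwiseDisjoint id ∧ ∀ B ∈ Q, (∀ t ∈ 𝒯, Disjoint B t) → B ∈ 𝒯 := by
  obtain ⟨m, ⟨hmQ, hm⟩, hmax⟩ := zorn_subset {𝒯 | 𝒯 ⊆ Q ∧ 𝒯.PairwiseDisjoint id}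
    fun c hc hchain => ⟨⋃₀ c, ⟨sUnion_subset fun s hs => (hc hs).1,
      (hchain.pairwiseDisjoint_sUnion id).2 fun s hs => (hc hs).2⟩,
      fun _ hs => subset_sUnion_of_mem hs⟩
  exact ⟨m, hmQ, hm, fun B hB hdisj => hmax ⟨insert_subset hB hmQ,
    hm.insert fun t ht _ => hdisj t ht⟩ (subset_insert B m) (mem_insert B m)⟩

theorem exists_subset_card_le_of_subset_biUnion {α β : Type u} {D : Set α} {B : α → Set β}
    {𝒮 : Set β} (h𝒮 : 𝒮 ⊆ ⋃ x ∈ D, B x) : ∃ A ⊆ D, #A ≤ #𝒮 ∧ 𝒮 ⊆ ⋃ x ∈ A, B x := by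
  choose idx hidxD hidx using fun s : 𝒮 => mem_iUnion₂.1 (h𝒮 s.2)
  exact ⟨range idx, range_subset_iff.2 hidxD, mk_range_le,
    fun s hs => mem_biUnion (mem_range_self ⟨s, hs⟩) (hidx _)⟩

section

variable (X : Type u) [TopologicalSpace X]

theorem cellularity_mem :
    cellularity X ∈ {κ : Cardinal.{u} | ℵ₀ ≤ κ ∧ ∀ 𝒞 : Set (Set X),
      (∀ U ∈ 𝒞, IsOpen U ∧ U.Nonempty) → 𝒞.PairwiseDisjoint id → #𝒞 ≤ κ} :=
  csInf_mem ⟨#(Set X) ⊔ ℵ₀, le_sup_right, fun 𝒞 _ _ => (mk_set_le 𝒞).trans le_sup_left⟩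

theorem piWeight_mem :
    piWeight X ∈ {κ : Cardinal.{u} | ℵ₀ ≤ κ ∧ ∃ P : Set (Set X), IsPiBase X P ∧ #P ≤ κ} :=
  csInf_mem ⟨#(Set X) ⊔ ℵ₀, le_sup_right, {V | IsOpen V ∧ V.Nonempty},
    ⟨fun _ hV => hV, fun U hU hUne => ⟨U, ⟨hU, hUne⟩, subset_rfl⟩⟩, (mk_set_le _).trans le_sup_left⟩

variable {X}

theorem piCharPoint_mem (x : X) :
    piCharPoint X x ∈
      {κ : Cardinal.{u} | ℵ₀ ≤ κ ∧ ∃ 𝒱 : Set (Set X), IsLocalPiBase X x 𝒱 ∧ #𝒱 ≤ κ} :=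
  csInf_mem ⟨#(Set X) ⊔ ℵ₀, le_sup_right, {V | IsOpen V ∧ V.Nonempty},
    ⟨fun _ hV => hV, fun U hU hxU => ⟨U, ⟨hU, x, hxU⟩, subset_rfl⟩⟩,
    (mk_set_le _).trans le_sup_left⟩

theorem biInter_closure_isOpen_mem_eq_singleton [T2Space X] (x : X) :
    ⋂ V ∈ {V : Set X | IsOpen V ∧ x ∈ V}, closure V = {x} := by
  refine eq_singleton_iff_unique_mem.2 ⟨mem_iInter₂.2 fun V hV => subset_closure hV.2, ?_⟩
  intro y hy
  by_contra hyx
  obtain ⟨U, W, hU, hW, hxU, hyW, hUW⟩ := t2_separation (Ne.symm hyx)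
  exact disjoint_left.1 (hUW.closure_left hW) (mem_iInter₂.1 hy U ⟨hU, hxU⟩) hyW

theorem wPsiCPoint_mem [T2Space X] (x : X) :
    wPsiCPoint X x ∈ {κ : Cardinal.{u} | ℵ₀ ≤ κ ∧ ∃ 𝒱 : Set (Set X),
      (∀ V ∈ 𝒱, IsOpen V) ∧ #𝒱 ≤ κ ∧ (⋂ V ∈ 𝒱, closure V) = {x}} :=
  csInf_mem ⟨#(Set X) ⊔ ℵ₀, le_sup_right, _, fun _ hV => hV.1, (mk_set_le _).trans le_sup_left,
    biInter_closure_isOpen_mem_eq_singleton x⟩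

theorem mem_closure_sUnion_of_maximal {P 𝒯 : Set (Set X)} {W : Set X} {x : X} (hW : IsOpen W)
    (hP : ∀ B ∈ P, B.Nonempty) (hmax : ∀ B ∈ P, B ⊆ W → (∀ t ∈ 𝒯, Disjoint B t) → B ∈ 𝒯)
    (hxW : x ∈ W) (hx : ∀ U, IsOpen U → x ∈ U → ∃ B ∈ P, B ⊆ U) : x ∈ closure (⋃₀ 𝒯) := by
  by_contra hx𝒯
  obtain ⟨B, hBP, hBU⟩ := hx _ (hW.inter isClosed_closure.isOpen_compl) ⟨hxW, hx𝒯⟩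
  have hdisj : ∀ t ∈ 𝒯, Disjoint B t := fun t ht =>
    disjoint_left.2 fun b hb hbt => (hBU hb).2 (subset_closure ⟨t, ht, hbt⟩)
  obtain ⟨b, hb⟩ := hP B hBP
  exact (hBU hb).2 (subset_closure ⟨B, hmax B hBP (fun y hy => (hBU hy).1) hdisj, hb⟩)

theorem isPiBase_biUnion_of_not_subset_closure (hX : Quasiregular X) {D : Set X}
    {B : X → Set (Set X)} (hB : ∀ x ∈ D, IsLocalPiBase X x (B x))
    (hD : ∀ 𝒮 ⊆ ⋃ x ∈ D, B x, #𝒮 ≤ cellularity X → closure (⋃₀ 𝒮) ≠ Set.univ →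
      ¬ D ⊆ closure (⋃₀ 𝒮)) :
    IsPiBase X (⋃ x ∈ D, B x) := by
  have hmem : ∀ V ∈ ⋃ x ∈ D, B x, IsOpen V ∧ V.Nonempty := fun V hV => by
    obtain ⟨x, hx, hV⟩ := mem_iUnion₂.1 hV
    exact (hB x hx).1 V hV
  refine ⟨hmem, fun U hU hUne => ?_⟩
  by_contra! hUD
  obtain ⟨G, hG, ⟨g, hg⟩, hGU⟩ := hX U hU hUne
  obtain ⟨𝒯, h𝒯Q, h𝒯disj, h𝒯max⟩ :=
    exists_maximal_pairwiseDisjoint {V ∈ ⋃ x ∈ D, B x | V ⊆ (closure G)ᶜ}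
  have h𝒯G : closure (⋃₀ 𝒯) ⊆ Gᶜ := closure_minimal
    (sUnion_subset fun t ht => (h𝒯Q ht).2.trans (compl_subset_compl.2 subset_closure))
    hG.isClosed_compl
  refine hD 𝒯 (fun t ht => (h𝒯Q ht).1)
    ((cellularity_mem X).2 𝒯 (fun t ht => hmem t (h𝒯Q ht).1) h𝒯disj)
    (fun h => h𝒯G (h ▸ Set.mem_univ g) hg) fun x hxD => ?_
  have hxU : x ∉ U := fun hxU => by
    obtain ⟨V, hV, hVU⟩ := (hB x hxD).2 U hU hxU
    exact hUD V (mem_biUnion hxD hV) hVU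
  refine mem_closure_sUnion_of_maximal isClosed_closure.isOpen_compl (fun V hV => (hmem V hV).2)
    (fun V hV hVG => h𝒯max V ⟨hV, hVG⟩) (fun hxG => hxU (hGU hxG)) fun W hW hxW => ?_
  obtain ⟨V, hV, hVW⟩ := (hB x hxD).2 W hW hxW
  exact ⟨V, mem_biUnion hxD hV, hVW⟩

theorem piWeight_le_piChar_pow [Nonempty X] (hX : Quasiregular X) :
    piWeight X ≤ piChar X ^ cellularity X := by
  obtain ⟨hκ, -⟩ := cellularity_mem X
  have hπχx : ∀ x, piCharPoint X x ≤ piChar X := le_ciSup bddAbove_of_small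
  have hπχ : ℵ₀ ≤ piChar X := (piCharPoint_mem (Classical.arbitrary X)).1.trans (hπχx _)
  set κ := cellularity X
  set μ := piChar X ^ κ
  have hπχμ : piChar X ≤ μ := self_le_power _ (one_le_aleph0.trans hκ)
  have hμ : ℵ₀ ≤ μ := hπχ.trans hπχμ
  have hκμ : Order.succ κ ≤ μ := succ_le_power_of_two_le (ofNat_le_aleph0.trans hπχ)
  choose B hB hBcard using fun x : X => (piCharPoint_mem x).2
  have hB_card : ∀ A : Set X, #A ≤ μ → #(⋃ x ∈ A, B x) ≤ μ := fun A hA =>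
    calc #(⋃ x ∈ A, B x) ≤ #A * ⨆ x : A, #(B x) := mk_biUnion_le _ _
      _ ≤ μ * μ := mul_le_mul' hA (ciSup_le' fun x => ((hBcard x).trans (hπχx x)).trans hπχμ)
      _ = μ := mul_eq_self hμ
  choose! pt hpt using fun (𝒮 : Set (Set X)) (h : closure (⋃₀ 𝒮) ≠ Set.univ) => nonempty_compl.2 h
  obtain ⟨D, hDcard, hD⟩ := exists_card_le_forall_subset_of_monotone hκ hκμ
    (f := fun A => pt '' {𝒮 | 𝒮 ⊆ ⋃ x ∈ A, B x ∧ #𝒮 ≤ κ})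
    (fun A A' hAA' => image_mono fun 𝒮 h𝒮 =>
      ⟨h𝒮.1.trans (biUnion_subset_biUnion_left hAA'), h𝒮.2⟩)
    fun A hA => calc
      _ ≤ #{𝒮 | 𝒮 ⊆ ⋃ x ∈ A, B x ∧ #𝒮 ≤ κ} := mk_image_le
      _ ≤ (#(⋃ x ∈ A, B x) ⊔ ℵ₀) ^ κ := mk_bounded_subset_le _ _
      _ ≤ μ ^ κ := power_le_power_right (sup_le (hB_card A hA) hμ)
      _ = μ := by rw [← power_mul, mul_eq_self hκ]
  have hπ : IsPiBase X (⋃ x ∈ D, B x) := by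
    refine isPiBase_biUnion_of_not_subset_closure hX (fun x _ => hB x)
      fun 𝒮 h𝒮D h𝒮κ h𝒮 hD𝒮 => ?_
    obtain ⟨A, hAD, hA𝒮, h𝒮A⟩ := exists_subset_card_le_of_subset_biUnion h𝒮D
    exact hpt 𝒮 h𝒮 (hD𝒮 (hD A hAD (hA𝒮.trans h𝒮κ) ⟨𝒮, ⟨h𝒮A, h𝒮κ⟩, rfl⟩))
  exact csInf_le' ⟨hμ, _, hπ, hB_card D hDcard⟩

theorem IsPiBase.exists_pairwiseDisjoint_closure_sUnion_eq {P : Set (Set X)}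
    (hP : IsPiBase X P) {W : Set X} (hW : IsOpen W) :
    ∃ 𝒯 ⊆ P, 𝒯.PairwiseDisjoint id ∧ closure (⋃₀ 𝒯) = closure W := by
  obtain ⟨𝒯, h𝒯Q, h𝒯disj, h𝒯max⟩ := exists_maximal_pairwiseDisjoint {B ∈ P | B ⊆ W}
  refine ⟨𝒯, fun t ht => (h𝒯Q ht).1, h𝒯disj,
    (closure_mono (sUnion_subset fun t ht => (h𝒯Q ht).2)).antisymm ?_⟩
  refine closure_minimal (fun x hx => ?_) isClosed_closure
  exact mem_closure_sUnion_of_maximal hW (fun B hB => (hP.1 B hB).2)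
    (fun B hB hBW => h𝒯max B ⟨hB, hBW⟩) hx fun U hU hxU => hP.2 U hU ⟨x, hxU⟩

variable (X)

theorem card_closure_image_isOpen_le :
    #(closure '' {W : Set X | IsOpen W}) ≤ piWeight X ^ cellularity X := by
  obtain ⟨hπ, P, hP, hPcard⟩ := piWeight_mem X
  have hsub : closure '' {W : Set X | IsOpen W} ⊆
      (fun 𝒯 => closure (⋃₀ 𝒯)) '' {𝒯 | 𝒯 ⊆ P ∧ #𝒯 ≤ cellularity X} := by
    rintro _ ⟨W, hW, rfl⟩
    obtain ⟨𝒯, h𝒯P, h𝒯disj, h𝒯⟩ := hP.exists_pairwiseDisjoint_closure_sUnion_eq hW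
    exact ⟨𝒯, ⟨h𝒯P, (cellularity_mem X).2 𝒯 (fun t ht => hP.1 t (h𝒯P ht)) h𝒯disj⟩, h𝒯⟩
  calc _ ≤ _ := mk_le_mk_of_subset hsub
    _ ≤ #{𝒯 | 𝒯 ⊆ P ∧ #𝒯 ≤ cellularity X} := mk_image_le
    _ ≤ (#P ⊔ ℵ₀) ^ cellularity X := mk_bounded_subset_le _ _
    _ ≤ _ := power_le_power_right (sup_le hPcard hπ)

theorem card_le_card_closure_image_isOpen_pow [T2Space X] :
    #X ≤ (#(closure '' {W : Set X | IsOpen W}) ⊔ ℵ₀) ^ wPsiC X := by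
  choose V hVopen hVcard hVinter using fun x : X => (wPsiCPoint_mem x).2
  let φ : X → {𝒜 : Set (Set X) | 𝒜 ⊆ closure '' {W : Set X | IsOpen W} ∧ #𝒜 ≤ wPsiC X} :=
    fun x => ⟨closure '' V x, image_mono fun W hW => hVopen x W hW,
      mk_image_le.trans ((hVcard x).trans (le_ciSup bddAbove_of_small x))⟩
  have hφ : Function.Injective φ := fun x y hxy => by
    have h := congrArg (fun 𝒜 => ⋂₀ 𝒜.1) hxy
    simp only [φ, sInter_image, hVinter] at h
    exact singleton_injective h
  exact (mk_le_of_injective hφ).trans (mk_bounded_subset_le _ _)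

theorem card_le_piWeight_pow [T2Space X] :
    #X ≤ piWeight X ^ (cellularity X * wPsiC X) := by
  obtain ⟨hκ, -⟩ := cellularity_mem X
  have hπw : ℵ₀ ≤ piWeight X ^ cellularity X :=
    (piWeight_mem X).1.trans (self_le_power _ (one_le_aleph0.trans hκ))
  calc #X ≤ (#(closure '' {W : Set X | IsOpen W}) ⊔ ℵ₀) ^ wPsiC X :=
        card_le_card_closure_image_isOpen_pow X
    _ ≤ (piWeight X ^ cellularity X) ^ wPsiC X :=
        power_le_power_right (sup_le (card_closure_image_isOpen_le X) hπw)
    _ = piWeight X ^ (cellularity X * wPsiC X) := power_mul.symm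

end

/-- If `X` is quasiregular and Hausdorff then `|X| ≤ πχ(X)^(c(X)·wψ_c(X))`. -/
theorem stmt_15 (X : Type u) [TopologicalSpace X] [T2Space X] (hX : Quasiregular X) :
    #X ≤ piChar X ^ (cellularity X * wPsiC X) := by
  rcases isEmpty_or_nonempty X with hX₀ | hX₀
  · simp
  calc #X ≤ piWeight X ^ (cellularity X * wPsiC X) := card_le_piWeight_pow X
    _ ≤ (piChar X ^ cellularity X) ^ (cellularity X * wPsiC X) :=
        power_le_power_right (piWeight_le_piChar_pow hX)
    _ = piChar X ^ (cellularity X * wPsiC X) := by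
        rw [← power_mul, ← mul_assoc, mul_eq_self (cellularity_mem X).1]
end

section
/- If X is a Lindelöf Hausdorff space, then d(X) ≤ πχ(X)^(c(X)). -/
open Cardinal Set TopologicalSpace

universe u

/-!
Fix local π-bases `𝒱 x` of size at most `πχ(X)`, and put `κ = c(X)` and `μ = πχ(X) ^ κ`, so that
`μ ^ κ = μ`. A closing-off argument of length `κ⁺` yields a set `D` of size at most `μ` such that
whenever at most `κ` families `𝒮`, each made of at most `κ` members of the bases `𝒱 x` with
`x ∈ D`, have sets `cl ⋃ 𝒮` covering `D`, these sets cover `X`.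

Such a `D` is dense. For `x ∉ cl D`, the closed set `cl D` is Lindelöf, so the Hausdorff property
gives countably many open neighbourhoods `W` of `x` such that `⋂ cl W` misses `cl D`. The members
of the bases at points of `D` that miss `cl W` have a subfamily `𝒮 W` of size at most `κ` whose
union has the same closure (a maximal disjoint refinement has size at most `κ`). Then the sets
`cl ⋃ 𝒮 W` cover `D` but miss `x`.
-/

namespace Cardinal

theorem mk_bounded_subset_le_of_power_eq {α : Type u} {s : Set α} {κ μ : Cardinal.{u}}
    (hs : #s ≤ μ) (hμ : ℵ₀ ≤ μ) (hμκ : μ ^ κ = μ) : #{t : Set α // t ⊆ s ∧ #t ≤ κ} ≤ μ :=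
  (mk_bounded_subset_le s κ).trans <| (power_le_power_right (max_le hs hμ)).trans_eq hμκ

theorem mk_iUnion_le_of_le {α ι : Type u} {f : ι → Set α} {μ : Cardinal.{u}} (hμ : ℵ₀ ≤ μ)
    (hι : #ι ≤ μ) (hf : ∀ i, #(f i) ≤ μ) : #(⋃ i, f i) ≤ μ :=
  (mk_iUnion_le f).trans <| (mul_le_mul' hι (ciSup_le' hf)).trans_eq (mul_eq_self hμ)

theorem exists_forall_lt_of_mk_lt_cof {α : Type u} [LinearOrder α] {s : Set α}
    (hs : #s < Order.cof α) : ∃ a, ∀ x ∈ s, x < a := by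
  by_contra! h
  exact hs.not_ge (Order.cof_le h)

theorem exists_mk_le_closed_under_small_subsets {α : Type u} {κ μ : Cardinal.{u}} (hκ : ℵ₀ ≤ κ)
    (hκμ : κ < μ) (hμκ : μ ^ κ = μ) (G : Set α → Set α) (hG : ∀ T : Set α, #T ≤ κ → #(G T) ≤ μ) :
    ∃ D : Set α, #D ≤ μ ∧ ∀ T ⊆ D, #T ≤ κ → G T ⊆ D := by
  have hμ : ℵ₀ ≤ μ := hκ.trans hκμ.le
  obtain ⟨stage, hstage⟩ : ∃ stage : (Order.succ κ).ord.ToType → Set α, ∀ i, stage i =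
      ⋃ T : {T : Set α // T ⊆ ⋃ j : Iio i, stage j ∧ #T ≤ κ}, G T.1 :=
    ⟨wellFounded_lt.fix fun i stage =>
      ⋃ T : {T : Set α // T ⊆ ⋃ j : Iio i, stage j j.2 ∧ #T ≤ κ}, G T.1,
      wellFounded_lt.fix_eq _⟩
  have hcard : ∀ i, #(stage i) ≤ μ := by
    intro i
    induction i using WellFoundedLT.induction with
    | _ i ih =>
    have hIio : #(Iio i) ≤ κ := Order.lt_succ_iff.mp (by simpa using mk_Iio_lt i)
    rw [hstage]
    refine mk_iUnion_le_of_le hμ (mk_bounded_subset_le_of_power_eq ?_ hμ hμκ) fun T => hG T T.2.2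
    exact mk_iUnion_le_of_le hμ (hIio.trans hκμ.le) fun j => ih j j.2
  refine ⟨⋃ i, stage i, mk_iUnion_le_of_le hμ ?_ hcard, fun T hT hTκ => ?_⟩
  · simpa using Order.succ_le_of_lt hκμ
  choose idx hidx using fun t : T => mem_iUnion.mp (hT t.2)
  obtain ⟨i, hi⟩ : ∃ i, ∀ j ∈ range idx, j < i := by
    refine exists_forall_lt_of_mk_lt_cof (mk_range_le.trans_lt ?_)
    rw [Ordinal.cof_toType, (isRegular_succ hκ).cof_ord]
    exact hTκ.trans_lt (Order.lt_succ_of_not_isMax (not_isMax κ))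
  have hTi : T ⊆ ⋃ j : Iio i, stage j := fun t ht =>
    mem_iUnion.mpr ⟨⟨idx ⟨t, ht⟩, hi _ (mem_range_self _)⟩, hidx ⟨t, ht⟩⟩
  refine subset_trans ?_ (subset_iUnion _ i)
  rw [hstage i]
  exact subset_iUnion_of_subset ⟨T, hTi, hTκ⟩ subset_rfl

end Cardinal

section SmallFamilies

variable {ι α : Type u}

theorem exists_subset_mk_le_of_subset_biUnion {f : ι → Set α} {s : Set α} {D : Set ι}
    (h : s ⊆ ⋃ i ∈ D, f i) : ∃ T ⊆ D, #T ≤ #s ∧ s ⊆ ⋃ i ∈ T, f i := by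
  choose idx hidxD hidx using fun a : s => mem_iUnion₂.mp (h a.2)
  exact ⟨range idx, range_subset_iff.mpr hidxD, mk_range_le,
    fun a ha => mem_iUnion₂.mpr ⟨_, mem_range_self ⟨a, ha⟩, hidx ⟨a, ha⟩⟩⟩

def smallFamilies (f : ι → Set α) (κ : Cardinal.{u}) (T : Set ι) : Set (Set (Set α)) :=
  {𝒜 | #𝒜 ≤ κ ∧ ∀ 𝒮 ∈ 𝒜, 𝒮 ⊆ ⋃ i ∈ T, f i ∧ #𝒮 ≤ κ}

variable {f : ι → Set α} {κ : Cardinal.{u}}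

theorem exists_subset_mk_le_mem_smallFamilies (hκ : ℵ₀ ≤ κ) {D : Set ι} {𝒜 : Set (Set α)}
    (h𝒜 : 𝒜 ∈ smallFamilies f κ D) : ∃ T ⊆ D, #T ≤ κ ∧ 𝒜 ∈ smallFamilies f κ T := by
  obtain ⟨T, hTD, hT, h𝒜T⟩ :=
    exists_subset_mk_le_of_subset_biUnion (sUnion_subset fun 𝒮 h𝒮 => (h𝒜.2 𝒮 h𝒮).1)
  refine ⟨T, hTD, hT.trans ?_, h𝒜.1,
    fun 𝒮 h𝒮 => ⟨(subset_sUnion_of_mem h𝒮).trans h𝒜T, (h𝒜.2 𝒮 h𝒮).2⟩⟩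
  rw [sUnion_eq_iUnion]
  exact mk_iUnion_le_of_le hκ h𝒜.1 fun 𝒮 => (h𝒜.2 𝒮 𝒮.2).2

theorem mk_smallFamilies_le {μ : Cardinal.{u}} (hμ : ℵ₀ ≤ μ) (hκμ : κ ≤ μ) (hμκ : μ ^ κ = μ)
    (hf : ∀ i, #(f i) ≤ μ) {T : Set ι} (hT : #T ≤ κ) : #(smallFamilies f κ T) ≤ μ := by
  have hW : #(⋃ i ∈ T, f i) ≤ μ := by
    rw [biUnion_eq_iUnion]
    exact mk_iUnion_le_of_le hμ (hT.trans hκμ) fun i => hf i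
  refine (mk_le_mk_of_subset (t := {𝒜 | 𝒜 ⊆ {𝒮 | 𝒮 ⊆ ⋃ i ∈ T, f i ∧ #𝒮 ≤ κ} ∧ #𝒜 ≤ κ})
    fun 𝒜 h𝒜 => ⟨fun 𝒮 h𝒮 => h𝒜.2 𝒮 h𝒮, h𝒜.1⟩).trans ?_
  exact mk_bounded_subset_le_of_power_eq (mk_bounded_subset_le_of_power_eq hW hμ hμκ) hμ hμκ

end SmallFamilies

section Topology

variable {X : Type u} [TopologicalSpace X]

theorem dens_le_mk {D : Set X} (hD : Dense D) : dens X ≤ #D :=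
  csInf_le' ⟨D, hD, rfl⟩

theorem piCharPoint_spec (x : X) :
    ℵ₀ ≤ piCharPoint X x ∧ ∃ 𝒱, IsLocalPiBase X x 𝒱 ∧ #𝒱 ≤ piCharPoint X x :=
  csInf_mem (s := {κ | ℵ₀ ≤ κ ∧ ∃ 𝒱, IsLocalPiBase X x 𝒱 ∧ #𝒱 ≤ κ})
    ⟨max ℵ₀ #(Set X), le_max_left _ _, {V | IsOpen V ∧ V.Nonempty},
    ⟨fun _ hV => hV, fun U hU hxU => ⟨U, ⟨hU, x, hxU⟩, subset_rfl⟩⟩,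
    le_max_of_le_right (mk_set_le _)⟩

theorem piCharPoint_le_piChar (x : X) : piCharPoint X x ≤ piChar X :=
  le_ciSup bddAbove_of_small x

theorem exists_isLocalPiBase_mk_le_piChar (x : X) :
    ∃ 𝒱, IsLocalPiBase X x 𝒱 ∧ #𝒱 ≤ piChar X :=
  let ⟨𝒱, h𝒱, h𝒱x⟩ := (piCharPoint_spec x).2
  ⟨𝒱, h𝒱, h𝒱x.trans (piCharPoint_le_piChar x)⟩

theorem aleph0_le_piChar [Nonempty X] : ℵ₀ ≤ piChar X :=
  (piCharPoint_spec (Classical.arbitrary X)).1.trans (piCharPoint_le_piChar _)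

theorem cellularity_spec : ℵ₀ ≤ cellularity X ∧ ∀ 𝒞 : Set (Set X),
    (∀ U ∈ 𝒞, IsOpen U ∧ U.Nonempty) → 𝒞.PairwiseDisjoint id → #𝒞 ≤ cellularity X :=
  csInf_mem (s := {κ | ℵ₀ ≤ κ ∧ ∀ 𝒞 : Set (Set X),
      (∀ U ∈ 𝒞, IsOpen U ∧ U.Nonempty) → 𝒞.PairwiseDisjoint id → #𝒞 ≤ κ})
    ⟨max ℵ₀ #(Set X), le_max_left _ _, fun _ _ _ => le_max_of_le_right (mk_set_le _)⟩

theorem aleph0_le_cellularity : ℵ₀ ≤ cellularity X :=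
  cellularity_spec.1

theorem IsLocalPiBase.mem_closure_sUnion {x : X} {𝒱 : Set (Set X)} (h : IsLocalPiBase X x 𝒱)
    {U : Set X} (hU : IsOpen U) (hx : x ∈ U) : x ∈ closure (⋃₀ {V ∈ 𝒱 | V ⊆ U}) := by
  refine mem_closure_iff.mpr fun o ho hxo => ?_
  obtain ⟨V, hV, hVsub⟩ := h.2 (o ∩ U) (ho.inter hU) ⟨hxo, hx⟩
  obtain ⟨v, hv⟩ := (h.1 V hV).2
  exact ⟨v, (hVsub hv).1, V, ⟨hV, fun _ hy => (hVsub hy).2⟩, hv⟩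

theorem exists_pairwiseDisjoint_refinement_sUnion_subset_closure (𝒪 : Set (Set X))
    (h𝒪 : ∀ O ∈ 𝒪, IsOpen O) : ∃ 𝒟 : Set (Set X), 𝒟.PairwiseDisjoint id ∧
      (∀ D ∈ 𝒟, IsOpen D ∧ D.Nonempty ∧ ∃ O ∈ 𝒪, D ⊆ O) ∧ ⋃₀ 𝒪 ⊆ closure (⋃₀ 𝒟) := by
  set P : Set (Set (Set X)) :=
    {𝒟 | 𝒟.PairwiseDisjoint id ∧ ∀ D ∈ 𝒟, IsOpen D ∧ D.Nonempty ∧ ∃ O ∈ 𝒪, D ⊆ O}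
  obtain ⟨𝒟, h𝒟⟩ : ∃ 𝒟, Maximal (· ∈ P) 𝒟 := by
    refine zorn_subset P fun c hcP hc => ⟨⋃₀ c, ⟨?_, ?_⟩, fun _ => subset_sUnion_of_mem⟩
    · exact (pairwiseDisjoint_sUnion hc.directedOn).2 fun 𝒟 h𝒟 => (hcP h𝒟).1
    · rintro D ⟨𝒟, h𝒟, hD⟩
      exact (hcP h𝒟).2 D hD
  refine ⟨𝒟, h𝒟.prop.1, h𝒟.prop.2, ?_⟩
  rintro z ⟨O, hO, hzO⟩
  refine mem_closure_iff.mpr fun o ho hzo => ?_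
  by_contra hdisj
  have hmem : insert (o ∩ O) 𝒟 ∈ P := by
    refine ⟨h𝒟.prop.1.insert fun D hD _ => ?_, ?_⟩
    · exact disjoint_iff_inter_eq_empty.mpr <| not_nonempty_iff_eq_empty.mp fun ⟨y, hyo, hyD⟩ =>
        hdisj ⟨y, hyo.1, D, hD, hyD⟩
    · rintro D (rfl | hD)
      · exact ⟨ho.inter (h𝒪 O hO), ⟨z, hzo, hzO⟩, O, hO, inter_subset_right⟩
      · exact h𝒟.prop.2 D hD
  have hoO : o ∩ O ∈ 𝒟 := h𝒟.2 hmem (subset_insert _ _) (mem_insert _ _)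
  exact hdisj ⟨z, hzo, o ∩ O, hoO, hzo, hzO⟩

theorem exists_subset_mk_le_cellularity_sUnion_subset_closure (𝒪 : Set (Set X))
    (h𝒪 : ∀ O ∈ 𝒪, IsOpen O) :
    ∃ 𝒮 ⊆ 𝒪, #𝒮 ≤ cellularity X ∧ ⋃₀ 𝒪 ⊆ closure (⋃₀ 𝒮) := by
  obtain ⟨𝒟, h𝒟disj, h𝒟, h𝒪𝒟⟩ := exists_pairwiseDisjoint_refinement_sUnion_subset_closure 𝒪 h𝒪
  choose f hf𝒪 hDf using fun D : 𝒟 => (h𝒟 D D.2).2.2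
  refine ⟨range f, range_subset_iff.mpr hf𝒪, ?_, h𝒪𝒟.trans (closure_mono ?_)⟩
  · exact mk_range_le.trans
      (cellularity_spec.2 𝒟 (fun D hD => ⟨(h𝒟 D hD).1, (h𝒟 D hD).2.1⟩) h𝒟disj)
  · rintro y ⟨D, hD, hyD⟩
    exact ⟨f ⟨D, hD⟩, mem_range_self _, hDf ⟨D, hD⟩ hyD⟩

theorem IsLindelof.exists_countable_nhds_iInter_closure_disjoint [T2Space X] {F : Set X}
    (hF : IsLindelof F) {x : X} (hx : x ∉ F) : ∃ 𝒲 : Set (Set X), 𝒲.Countable ∧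
      (∀ W ∈ 𝒲, IsOpen W ∧ x ∈ W) ∧ Disjoint (⋂ W ∈ 𝒲, closure W) F := by
  choose! A B hA hB hxA hyB hAB using fun y (hy : y ∈ F) =>
    t2_separation (ne_of_mem_of_not_mem hy hx).symm
  obtain ⟨t, htc, htF, hFt⟩ :=
    hF.elim_nhds_subcover B fun y hy => (hB y hy).mem_nhds (hyB y hy)
  refine ⟨A '' t, htc.image A,
    forall_mem_image.mpr fun y hy => ⟨hA y (htF y hy), hxA y (htF y hy)⟩,
    disjoint_left.mpr fun z hz hzF => ?_⟩
  obtain ⟨y, hy, hzB⟩ := mem_iUnion₂.mp (hFt hzF)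
  exact disjoint_left.mp ((hAB y (htF y hy)).closure_left (hB y (htF y hy)))
    (mem_iInter₂.mp hz _ (mem_image_of_mem A hy)) hzB

end Topology

theorem dense_of_forall_smallFamilies {X : Type u} [TopologicalSpace X] [LindelofSpace X]
    [T2Space X] {Vb : X → Set (Set X)} (hVb : ∀ x, IsLocalPiBase X x (Vb x)) {D : Set X}
    (hD : ∀ 𝒜 ∈ smallFamilies Vb (cellularity X) D,
      D ⊆ ⋃ 𝒮 ∈ 𝒜, closure (⋃₀ 𝒮) → ⋃ 𝒮 ∈ 𝒜, closure (⋃₀ 𝒮) = Set.univ) :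
    Dense D := by
  by_contra hnd
  obtain ⟨x, hx⟩ : (closure D)ᶜ.Nonempty := by
    rwa [nonempty_compl, Ne, ← dense_iff_closure_eq]
  obtain ⟨𝒲, h𝒲c, h𝒲, h𝒲D⟩ :=
    isClosed_closure.isLindelof.exists_countable_nhds_iInter_closure_disjoint hx
  set 𝒪 : Set X → Set (Set X) := fun W => {V ∈ ⋃ y ∈ D, Vb y | V ⊆ (closure W)ᶜ}
  choose! 𝒮 h𝒮𝒪 h𝒮κ h𝒮cl using fun W (_ : W ∈ 𝒲) =>
    exists_subset_mk_le_cellularity_sUnion_subset_closure (𝒪 W) fun V hV => by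
      obtain ⟨y, -, hVy⟩ := mem_iUnion₂.mp hV.1
      exact ((hVb y).1 V hVy).1
  have hD𝒮 : D ⊆ ⋃ 𝒮' ∈ 𝒮 '' 𝒲, closure (⋃₀ 𝒮') := by
    intro d hd
    obtain ⟨W, hW, hdW⟩ : ∃ W ∈ 𝒲, d ∉ closure W := by
      simpa using disjoint_right.mp h𝒲D (subset_closure hd)
    have hd𝒪 : d ∈ closure (⋃₀ 𝒪 W) := closure_mono
      (sUnion_mono fun V hV => show V ∈ 𝒪 W from ⟨mem_biUnion hd hV.1, hV.2⟩)
      ((hVb d).mem_closure_sUnion isClosed_closure.isOpen_compl hdW)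
    refine mem_biUnion (mem_image_of_mem 𝒮 hW) ?_
    exact closure_minimal (h𝒮cl W hW) isClosed_closure hd𝒪
  have hx𝒮 : x ∉ ⋃ 𝒮' ∈ 𝒮 '' 𝒲, closure (⋃₀ 𝒮') := by
    simp only [biUnion_image, mem_iUnion₂, not_exists]
    intro W hW hxW
    obtain ⟨z, hzW, V, hV, hzV⟩ := mem_closure_iff.mp hxW W (h𝒲 W hW).1 (h𝒲 W hW).2
    exact (h𝒮𝒪 W hW hV).2 hzV (subset_closure hzW)
  have h𝒜 : 𝒮 '' 𝒲 ∈ smallFamilies Vb (cellularity X) D :=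
    ⟨mk_image_le.trans (h𝒲c.le_aleph0.trans aleph0_le_cellularity),
      forall_mem_image.mpr fun W hW => ⟨fun V hV => (h𝒮𝒪 W hW hV).1, h𝒮κ W hW⟩⟩
  exact hx𝒮 ((hD _ h𝒜 hD𝒮).symm ▸ mem_univ x)

/-- If `X` is Lindelöf and Hausdorff then `d(X) ≤ πχ(X)^(c(X))`. -/
theorem stmt_18 (X : Type u) [TopologicalSpace X] [LindelofSpace X] [T2Space X] :
    dens X ≤ piChar X ^ cellularity X := by
  rcases isEmpty_or_nonempty X with hX | hX
  · exact (dens_le_mk dense_univ).trans (by simp)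
  set κ := cellularity X
  set π := piChar X
  have hκ : ℵ₀ ≤ κ := aleph0_le_cellularity
  have hπ : ℵ₀ ≤ π := aleph0_le_piChar
  have hκμ : κ < π ^ κ := cantor' κ (one_lt_aleph0.trans_le hπ)
  have hπμ : π ≤ π ^ κ := self_le_power π (one_le_aleph0.trans hκ)
  have hμκ : (π ^ κ) ^ κ = π ^ κ := by rw [← power_mul, mul_eq_self hκ]
  choose Vb hVb hVbπ using exists_isLocalPiBase_mk_le_piChar (X := X)
  set wit : Set (Set (Set X)) → X := fun 𝒜 => Classical.epsilon (· ∉ ⋃ 𝒮 ∈ 𝒜, closure (⋃₀ 𝒮))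
  obtain ⟨D, hDμ, hD⟩ := exists_mk_le_closed_under_small_subsets hκ hκμ hμκ
    (fun T => wit '' smallFamilies Vb κ T) fun T hT =>
      mk_image_le.trans (mk_smallFamilies_le (hκ.trans hκμ.le) hκμ.le hμκ
        (fun x => (hVbπ x).trans hπμ) hT)
  refine (dens_le_mk (dense_of_forall_smallFamilies hVb fun 𝒜 h𝒜 hD𝒜 => ?_)).trans hDμ
  by_contra hne
  obtain ⟨T, hTD, hTκ, h𝒜T⟩ := exists_subset_mk_le_mem_smallFamilies hκ h𝒜
  exact Classical.epsilon_spec (ne_univ_iff_exists_notMem _ |>.mp hne)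
    (hD𝒜 (hD T hTD hTκ (mem_image_of_mem wit h𝒜T)))
end
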